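/- Condition-number form of the relative perturbation bound: let A, E, B, X, Y be n×n quaternion matrices with B = A + E. Assume X is a k-Drazin inverse of A, Y is an m-Drazin inverse of B, E = (A * X) * E * (A * X), 1 + X * E is a unit of the matrix ring, ‖(1 + X * E)⁻¹‖₂ ≤ 1 / (1 - ‖X * E‖₂), and ‖X‖₂ * ‖E‖₂ < 1. Then ‖Y - X‖₂ ≤ ‖X‖₂ * (‖X‖₂ * ‖E‖₂) / (1 - ‖X‖₂ * ‖E‖₂); equivalently, writing κ = ‖A‖₂ * ‖X‖₂ and assuming ‖A‖₂ > 0, the relative error ‖Y - X‖₂ / ‖X‖₂ is at most (κ * ‖E‖₂ / ‖A‖₂) / (1 - κ * ‖E‖₂ / ‖A‖₂). -/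

import Mathlib

/-
With `p = A X`, the condition `E = p E p` gives `p E = E p = E`, so `A (1 + X E) = A + E`, the
idempotent `p` commutes with `1 + X E`, and `(A + E)ᵏ (1 - p) = Aᵏ (1 - p) = 0`. Hence
`(1 + X E)⁻¹ X` is a Drazin inverse of `B = A + E` of index `k`, and by uniqueness of Drazin
inverses (for any two indices) it equals `Y`. Then `Y - X = -(1 + X E)⁻¹ X E X`, and
submultiplicativity of the spectral norm with the bound on `‖(1 + X E)⁻¹‖₂` gives the estimate,
since `r ↦ r / (1 - r)` is increasing for `r < 1`.
-/

noncomputable section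

notation "ℍ" => Quaternion ℝ

/-- The bounded ℝ-linear map `x ↦ M.mulVec x` between `PiLp 2` spaces of quaternion
vectors. -/
def mulVecCLM {m n : ℕ} (M : Matrix (Fin m) (Fin n) ℍ) :
    PiLp 2 (fun _ : Fin n => ℍ) →L[ℝ] PiLp 2 (fun _ : Fin m => ℍ) :=
  LinearMap.toContinuousLinearMap
    { toFun := fun x => WithLp.toLp 2 (M.mulVec x)
      map_add' := fun x y => by simp [Matrix.mulVec_add]
      map_smul' := fun r x => by simp [Matrix.mulVec_smul] }

/-- The spectral norm of a quaternion matrix: the operator norm of `x ↦ M.mulVec x`. -/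
def specNorm {m n : ℕ} (M : Matrix (Fin m) (Fin n) ℍ) : ℝ := ‖mulVecCLM M‖

/-- `X` is a `k`-Drazin inverse of the square quaternion matrix `A`. -/
def IsDrazinInverse {n : ℕ} (A X : Matrix (Fin n) (Fin n) ℍ) (k : ℕ) : Prop :=
  A ^ k * X * A = A ^ k ∧ X * A * X = X ∧ A * X = X * A

section DrazinInverse

variable {R : Type*} [Ring R] {a x y e : R}

theorem pow_mul_mul_eq_pow_of_le {k N : ℕ} (h : a ^ k * x * a = a ^ k) (hkN : k ≤ N) :
    a ^ N * x * a = a ^ N := by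
  obtain ⟨j, rfl⟩ := Nat.exists_eq_add_of_le hkN
  rw [add_comm, pow_add, mul_assoc, mul_assoc, ← mul_assoc (a ^ k), h]

theorem isIdempotentElem_mul_of_mul_mul_self (h : x * a * x = x) : IsIdempotentElem (a * x) := by
  rw [IsIdempotentElem, mul_assoc, ← mul_assoc x, h]

theorem eq_pow_mul_pow_succ_of_mul_mul_self (h : x * a * x = x) (hc : Commute a x) (N : ℕ) :
    x = a ^ N * x ^ (N + 1) := by
  have hx : a * x * x = x := by rw [hc.eq, h]
  have hpow : (a * x) ^ N * x = x := by
    induction N with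
    | zero => rw [pow_zero, one_mul]
    | succ N ih => rw [pow_succ, mul_assoc, hx, ih]
  rw [pow_succ, ← mul_assoc, ← hc.mul_pow, hpow]

theorem drazinInverse_unique {k m : ℕ}
    (hx₁ : a ^ k * x * a = a ^ k) (hx₂ : x * a * x = x) (hx₃ : Commute a x)
    (hy₁ : a ^ m * y * a = a ^ m) (hy₂ : y * a * y = y) (hy₃ : Commute a y) : x = y := by
  set N := max k m
  have hxN : a ^ (N + 1) * x = a ^ N := by
    rw [pow_succ, mul_assoc, hx₃.eq, ← mul_assoc, pow_mul_mul_eq_pow_of_le hx₁ (le_max_left k m)]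
  have hyN : y * a ^ (N + 1) = a ^ N := by
    rw [pow_succ, ← mul_assoc, ← (hy₃.pow_left N).eq,
      pow_mul_mul_eq_pow_of_le hy₁ (le_max_right k m)]
  have hx : x = y * (a * x) := calc
    x = a ^ N * x ^ (N + 1) := eq_pow_mul_pow_succ_of_mul_mul_self hx₂ hx₃ N
    _ = y * (a * x) ^ (N + 1) := by rw [hx₃.mul_pow, ← mul_assoc, hyN]
    _ = y * (a * x) := by rw [(isIdempotentElem_mul_of_mul_mul_self hx₂).pow_succ_eq]
  have hy : y = y * a * x := calc
    y = a ^ N * y ^ (N + 1) := eq_pow_mul_pow_succ_of_mul_mul_self hy₂ hy₃ N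
    _ = y ^ (N + 1) * (a ^ (N + 1) * x) := by rw [hxN, (hy₃.pow_pow N (N + 1)).eq]
    _ = (a * y) ^ (N + 1) * x := by rw [← mul_assoc, hy₃.mul_pow, (hy₃.pow_pow _ _).eq]
    _ = y * a * x := by rw [(isIdempotentElem_mul_of_mul_mul_self hy₂).pow_succ_eq, hy₃.eq]
  rw [hx, ← mul_assoc, ← hy]

theorem pow_mul_eq_pow_mul_of_mul_eq {b c q : R} (h : b * q = c * q) (hc : Commute c q) (j : ℕ) :
    b ^ j * q = c ^ j * q := by
  induction j with
  | zero => rw [pow_zero, pow_zero]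
  | succ j ih =>
    rw [pow_succ, mul_assoc, h, hc.eq, ← mul_assoc, ih, mul_assoc, ← hc.eq, ← mul_assoc,
      ← pow_succ]

theorem add_pow_mul_mul_eq_add_pow {k : ℕ} (hx₁ : a ^ k * x * a = a ^ k) (hx₃ : Commute a x)
    (hep : e * (a * x) = e) : (a + e) ^ k * (a * x) = (a + e) ^ k := by
  have hb : (a + e) * (1 - a * x) = a * (1 - a * x) := by
    rw [add_mul, mul_sub e, mul_one, hep, sub_self, add_zero]
  have ha : Commute a (1 - a * x) := (Commute.one_right a).sub_right ((Commute.refl a).mul_right hx₃)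
  have hak : a ^ k * (1 - a * x) = 0 := by
    rw [mul_sub, mul_one, hx₃.eq, ← mul_assoc, hx₁, sub_self]
  have hbk := (pow_mul_eq_pow_mul_of_mul_eq hb ha k).trans hak
  rwa [mul_sub, mul_one, sub_eq_zero, eq_comm] at hbk

theorem drazinInverse_add {k : ℕ}
    (hx₁ : a ^ k * x * a = a ^ k) (hx₂ : x * a * x = x) (hx₃ : Commute a x)
    (he : e = a * x * e * (a * x)) (u : Rˣ) (hu : (u : R) = 1 + x * e) :
    (a + e) ^ k * (↑u⁻¹ * x) * (a + e) = (a + e) ^ k ∧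
      ↑u⁻¹ * x * (a + e) * (↑u⁻¹ * x) = ↑u⁻¹ * x ∧ Commute (a + e) (↑u⁻¹ * x) := by
  obtain ⟨p, hp⟩ : ∃ p, a * x = p := ⟨_, rfl⟩
  rw [hp] at he
  have hpp : p * p = p := by rw [← hp, (isIdempotentElem_mul_of_mul_mul_self hx₂).eq]
  have hpe : p * e = e := by rw [he, ← mul_assoc, ← mul_assoc, hpp]
  have hep : e * p = e := by rw [he, mul_assoc _ p p, hpp]
  have hxa : x * a = p := hx₃.eq ▸ hp
  have hpx : p * x = x := by rw [← hxa, hx₂]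
  have hcpu : Commute p u := by
    rw [Commute, SemiconjBy, hu, mul_add, add_mul, mul_one, one_mul, ← mul_assoc, hpx, mul_assoc,
      hep]
  have hu₁ : (↑u⁻¹ : R) * (1 - p) = 1 - p := by
    rw [Units.inv_mul_eq_iff_eq_mul, hu, add_mul, one_mul, mul_assoc, mul_sub, mul_one, hep,
      sub_self, mul_zero, add_zero]
  have hbz : (a + e) * (↑u⁻¹ * x) = p := by
    have hau : a * u = a + e := by rw [hu, mul_add, mul_one, ← mul_assoc, hp, hpe]
    rw [← hau, mul_assoc, Units.mul_inv_cancel_left, hp]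
  have hzb : ↑u⁻¹ * x * (a + e) = p := by
    have hxb : x * (a + e) = u - (1 - p) := by rw [mul_add, hxa, hu]; abel
    rw [mul_assoc, hxb, mul_sub, Units.inv_mul, hu₁, sub_sub_cancel]
  refine ⟨?_, ?_, hbz.trans hzb.symm⟩
  · rw [mul_assoc, hzb, ← hp, add_pow_mul_mul_eq_add_pow hx₁ hx₃ (hp ▸ hep)]
  · rw [hzb, ← mul_assoc, hcpu.units_inv_right.eq, mul_assoc, hpx]

end DrazinInverse

theorem Units.inv_mul_sub_self {R : Type*} [Ring R] (u : Rˣ) (x : R) :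
    ↑u⁻¹ * x - x = -(↑u⁻¹ * (↑u - 1) * x) := by
  rw [mul_sub, Units.inv_mul, mul_one, sub_mul, one_mul, neg_sub]

theorem div_one_sub_le_div_one_sub {r t : ℝ} (hrt : r ≤ t) (ht : t < 1) :
    r / (1 - r) ≤ t / (1 - t) := by
  rw [div_le_div_iff₀ (by linarith) (by linarith)]
  nlinarith

theorem mulVecCLM_mul {l m n : ℕ} (M : Matrix (Fin l) (Fin m) ℍ) (N : Matrix (Fin m) (Fin n) ℍ) :
    mulVecCLM (M * N) = (mulVecCLM M).comp (mulVecCLM N) :=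
  ContinuousLinearMap.ext fun x => PiLp.ext fun i => by
    simp [mulVecCLM, ← Matrix.mulVec_mulVec]

theorem mulVecCLM_neg {m n : ℕ} (M : Matrix (Fin m) (Fin n) ℍ) :
    mulVecCLM (-M) = -mulVecCLM M :=
  ContinuousLinearMap.ext fun x => PiLp.ext fun i => by
    simp [mulVecCLM, Matrix.neg_mulVec]

theorem specNorm_nonneg {m n : ℕ} (M : Matrix (Fin m) (Fin n) ℍ) : 0 ≤ specNorm M :=
  norm_nonneg (mulVecCLM M)

theorem specNorm_neg {m n : ℕ} (M : Matrix (Fin m) (Fin n) ℍ) : specNorm (-M) = specNorm M := by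
  rw [specNorm, mulVecCLM_neg]
  exact norm_neg (mulVecCLM M)

theorem specNorm_mul_le {l m n : ℕ} (M : Matrix (Fin l) (Fin m) ℍ) (N : Matrix (Fin m) (Fin n) ℍ) :
    specNorm (M * N) ≤ specNorm M * specNorm N := by
  rw [specNorm, mulVecCLM_mul]
  exact ContinuousLinearMap.opNorm_comp_le _ _

theorem specNorm_mul_mul_le_of_le_inv {l m n : ℕ} (U : Matrix (Fin l) (Fin m) ℍ)
    (X : Matrix (Fin m) (Fin n) ℍ) (E : Matrix (Fin n) (Fin m) ℍ)
    (hU : specNorm U ≤ 1 / (1 - specNorm (X * E))) (hsmall : specNorm X * specNorm E < 1) :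
    specNorm (U * (X * E) * X) ≤
      specNorm X * (specNorm X * specNorm E) / (1 - specNorm X * specNorm E) := by
  have hX := specNorm_nonneg X
  have hXE := specNorm_nonneg (X * E)
  calc specNorm (U * (X * E) * X)
      ≤ specNorm U * specNorm (X * E) * specNorm X :=
        (specNorm_mul_le _ _).trans (mul_le_mul_of_nonneg_right (specNorm_mul_le _ _) hX)
    _ ≤ 1 / (1 - specNorm (X * E)) * specNorm (X * E) * specNorm X := by gcongr
    _ = specNorm X * (specNorm (X * E) / (1 - specNorm (X * E))) := by ring
    _ ≤ specNorm X * (specNorm X * specNorm E / (1 - specNorm X * specNorm E)) :=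
        mul_le_mul_of_nonneg_left (div_one_sub_le_div_one_sub (specNorm_mul_le X E) hsmall) hX
    _ = _ := by ring

/-- Condition-number form of the relative perturbation bound for the Drazin inverse,
with condition number `κ = ‖A‖₂ * ‖X‖₂`. -/
theorem drazin_perturbation_condition_number_bound {n : ℕ}
    (A E B X Y : Matrix (Fin n) (Fin n) ℍ) (k m : ℕ)
    (hB : B = A + E)
    (hX : IsDrazinInverse A X k) (hY : IsDrazinInverse B Y m)
    (hE : E = (A * X) * E * (A * X))
    (hU : IsUnit (1 + X * E))
    (hinv : specNorm (Ring.inverse (1 + X * E)) ≤ 1 / (1 - specNorm (X * E)))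
    (hsmall : specNorm X * specNorm E < 1) :
    specNorm (Y - X) ≤
      specNorm X * (specNorm X * specNorm E) / (1 - specNorm X * specNorm E) ∧
    (0 < specNorm A →
      specNorm (Y - X) / specNorm X ≤
        (specNorm A * specNorm X * specNorm E / specNorm A) /
          (1 - specNorm A * specNorm X * specNorm E / specNorm A)) := by
  obtain ⟨u, hu⟩ := hU
  obtain ⟨hX₁, hX₂, hX₃⟩ := hX
  obtain ⟨hY₁, hY₂, hY₃⟩ := hY
  obtain ⟨hZ₁, hZ₂, hZ₃⟩ := drazinInverse_add hX₁ hX₂ hX₃ hE u hu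
  subst hB
  have hYX : Y - X = -(Ring.inverse (1 + X * E) * (X * E) * X) := by
    rw [drazinInverse_unique hY₁ hY₂ hY₃ hZ₁ hZ₂ hZ₃, Units.inv_mul_sub_self, ← hu,
      Ring.inverse_unit, hu, add_sub_cancel_left]
  have hbound : specNorm (Y - X) ≤
      specNorm X * (specNorm X * specNorm E) / (1 - specNorm X * specNorm E) := by
    rw [hYX, specNorm_neg]
    exact specNorm_mul_mul_le_of_le_inv _ X E hinv hsmall
  refine ⟨hbound, fun hA => ?_⟩
  rw [mul_assoc (specNorm A), mul_div_cancel_left₀ _ hA.ne']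
  refine div_le_of_le_mul₀ (specNorm_nonneg X) ?_ (hbound.trans_eq (by ring))
  exact div_nonneg (mul_nonneg (specNorm_nonneg X) (specNorm_nonneg E)) (by linarith)
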